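/- arXiv:1801.08453 — 2 statements merged into one kernel-verified Lean document; each statement's English description precedes it below -/
import Mathlib

section
/- Let μ be a finite Borel measure on a measurable space, let 1 < p < 2 and set p' = p/(p−1). Let 0 < ε ≤ 1/2, let {S_i}_{i∈I} be a countable family of pairwise disjoint measurable sets with μ(S_i) > 0, and for each i let I_i ⊂ S_i be measurable with μ(I_i) > 0 and μ(S_i ∖ I_i) ≤ ε μ(S_i). Then for every g ∈ L²(μ): Σ_{i∈I} |⟨g⟩_{S_i} − ⟨g⟩_{I_i}|² μ(S_i) ≤ C(p) ε^{2/p'} ∫ |g|² dμ, where ⟨g⟩_E = μ(E)^{-1} ∫_E g dμ and C(p) depends only on p. -/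
open MeasureTheory
open scoped ENNReal

/-!
Write `c = ⨍_I g`. Since `g - c` has integral zero over `I`, `(⨍_S g - c) μ(S) = ∫_{S \ I} (g - c)`,
so Cauchy–Schwarz on `S \ I` and `μ(S \ I) ≤ ε μ(S)` give `(⨍_S g - c)² μ(S) ≤ ε ∫_{S \ I} (g - c)²`.
As `ε ≤ 1/2` forces `μ(S \ I) ≤ μ(I)`, Jensen on `I` gives `c² μ(S \ I) ≤ ∫_I g²`, whence
`∫_{S \ I} (g - c)² ≤ 2 ∫_S g²`. Summing over the disjoint `S i` yields the bound `2 ε ∫ g²`, which is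
stronger than the claimed one because `2/p' ≤ 1` and `ε ≤ 1`.
-/

section

variable {X : Type*} [MeasurableSpace X] {μ : Measure X} [IsFiniteMeasure μ]

theorem sq_setAverage_mul_measureReal_le_setIntegral_sq {f : X → ℝ} (hf : MemLp f 2 μ)
    (s : Set X) : (⨍ x in s, f x ∂μ) ^ 2 * μ.real s ≤ ∫ x in s, f x ^ 2 ∂μ := by
  rcases eq_or_ne (μ s) 0 with hs | hs
  · simp [measureReal_def, hs, Measure.restrict_eq_zero.mpr hs]
  have jensen : (⨍ x in s, f x ∂μ) ^ 2 ≤ ⨍ x in s, f x ^ 2 ∂μ :=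
    even_two.convexOn_pow.map_set_average_le (continuous_pow 2).continuousOn isClosed_univ hs
      (measure_ne_top μ s) (.of_forall fun _ ↦ trivial) (hf.integrable one_le_two).integrableOn
      hf.integrable_sq.integrableOn
  calc (⨍ x in s, f x ∂μ) ^ 2 * μ.real s ≤ μ.real s * ⨍ x in s, f x ^ 2 ∂μ := by
        rw [mul_comm]; gcongr
    _ = ∫ x in s, f x ^ 2 ∂μ := measure_smul_setAverage _ (measure_ne_top μ s)

theorem sq_setIntegral_le_measureReal_mul_setIntegral_sq {f : X → ℝ} (hf : MemLp f 2 μ)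
    (s : Set X) : (∫ x in s, f x ∂μ) ^ 2 ≤ μ.real s * ∫ x in s, f x ^ 2 ∂μ := by
  rw [← measure_smul_setAverage f (measure_ne_top μ s), smul_eq_mul]
  calc (μ.real s * ⨍ x in s, f x ∂μ) ^ 2
      = μ.real s * ((⨍ x in s, f x ∂μ) ^ 2 * μ.real s) := by ring
    _ ≤ μ.real s * ∫ x in s, f x ^ 2 ∂μ := by
      gcongr; exact sq_setAverage_mul_measureReal_le_setIntegral_sq hf s

theorem setAverage_sub_setAverage_mul_measureReal {S I : Set X} (hI : MeasurableSet I)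
    (hIS : I ⊆ S) {g : X → ℝ} (hg : Integrable g μ) :
    ((⨍ x in S, g x ∂μ) - ⨍ x in I, g x ∂μ) * μ.real S
      = ∫ x in S \ I, (g x - ⨍ x in I, g x ∂μ) ∂μ := by
  rw [integral_sub hg.integrableOn (integrableOn_const (measure_ne_top μ _)), setIntegral_const,
    setIntegral_sdiff hI hg.integrableOn hIS, measureReal_sdiff hIS hI, smul_eq_mul,
    ← measure_smul_setAverage g (measure_ne_top μ S),
    ← measure_smul_setAverage g (measure_ne_top μ I), smul_eq_mul, smul_eq_mul]
  ring

variable {S I : Set X} {g : X → ℝ}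

theorem sq_setAverage_sub_setAverage_mul_measureReal_le (hI : MeasurableSet I) (hIS : I ⊆ S)
    (hS : 0 < μ.real S) {ε : ℝ} (hε : μ.real (S \ I) ≤ ε * μ.real S) (hg : MemLp g 2 μ) :
    ((⨍ x in S, g x ∂μ) - ⨍ x in I, g x ∂μ) ^ 2 * μ.real S
      ≤ ε * ∫ x in S \ I, (g x - ⨍ x in I, g x ∂μ) ^ 2 ∂μ := by
  have cauchy_schwarz := sq_setIntegral_le_measureReal_mul_setIntegral_sq
    (f := fun x ↦ g x - ⨍ x in I, g x ∂μ) (hg.sub (memLp_const _)) (S \ I)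
  rw [← setAverage_sub_setAverage_mul_measureReal hI hIS (hg.integrable one_le_two)] at cauchy_schwarz
  set c := ⨍ x in I, g x ∂μ
  set J := ∫ x in S \ I, (g x - c) ^ 2 ∂μ
  have hJ : 0 ≤ J := setIntegral_nonneg_of_ae (.of_forall fun _ ↦ sq_nonneg _)
  refine le_of_mul_le_mul_right ?_ hS
  calc ((⨍ x in S, g x ∂μ) - c) ^ 2 * μ.real S * μ.real S
      = (((⨍ x in S, g x ∂μ) - c) * μ.real S) ^ 2 := by ring
    _ ≤ μ.real (S \ I) * J := cauchy_schwarz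
    _ ≤ ε * μ.real S * J := by gcongr
    _ = ε * J * μ.real S := by ring

theorem setIntegral_sdiff_sub_setAverage_sq_le (hI : MeasurableSet I) (hIS : I ⊆ S)
    (hμ : μ.real (S \ I) ≤ μ.real I) (hg : MemLp g 2 μ) :
    ∫ x in S \ I, (g x - ⨍ x in I, g x ∂μ) ^ 2 ∂μ ≤ 2 * ∫ x in S, g x ^ 2 ∂μ := by
  set c := ⨍ x in I, g x ∂μ
  have hg2 : Integrable (fun x ↦ g x ^ 2) μ := hg.integrable_sq
  have pointwise : ∀ x, (g x - c) ^ 2 ≤ 2 * g x ^ 2 + 2 * c ^ 2 := fun x ↦ by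
    nlinarith [sq_nonneg (g x + c)]
  calc ∫ x in S \ I, (g x - c) ^ 2 ∂μ ≤ ∫ x in S \ I, (2 * g x ^ 2 + 2 * c ^ 2) ∂μ :=
        setIntegral_mono (hg.sub (memLp_const c)).integrable_sq.integrableOn
          ((hg2.const_mul 2).add (integrable_const _)).integrableOn pointwise
    _ = 2 * ∫ x in S \ I, g x ^ 2 ∂μ + 2 * (c ^ 2 * μ.real (S \ I)) := by
        rw [integral_add (hg2.const_mul 2).integrableOn (integrableOn_const (measure_ne_top μ _)),
          integral_const_mul, setIntegral_const, smul_eq_mul]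
        ring
    _ ≤ 2 * ∫ x in S \ I, g x ^ 2 ∂μ + 2 * (c ^ 2 * μ.real I) := by gcongr
    _ ≤ 2 * ∫ x in S \ I, g x ^ 2 ∂μ + 2 * ∫ x in I, g x ^ 2 ∂μ := by
        gcongr; exact sq_setAverage_mul_measureReal_le_setIntegral_sq hg I
    _ = 2 * ∫ x in S, g x ^ 2 ∂μ := by
        rw [setIntegral_sdiff hI hg2.integrableOn hIS]; ring

theorem ofReal_sq_setAverage_sub_setAverage_mul_le (hI : MeasurableSet I) (hIS : I ⊆ S)
    (hS : 0 < μ S) {ε : ℝ} (hε0 : 0 ≤ ε) (hε2 : ε ≤ 1 / 2)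
    (hε : μ (S \ I) ≤ ENNReal.ofReal ε * μ S) (hg : MemLp g 2 μ) :
    ENNReal.ofReal (((⨍ x in S, g x ∂μ) - ⨍ x in I, g x ∂μ) ^ 2) * μ S
      ≤ ENNReal.ofReal (2 * ε) * ∫⁻ x in S, ENNReal.ofReal (g x ^ 2) ∂μ := by
  have hSr : 0 < μ.real S := ENNReal.toReal_pos hS.ne' (measure_ne_top μ S)
  have hεr : μ.real (S \ I) ≤ ε * μ.real S := by
    simpa [measureReal_def, ENNReal.toReal_mul, hε0] using
      ENNReal.toReal_mono (by finiteness) hε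
  have hDI : μ.real (S \ I) ≤ μ.real I := by
    rw [measureReal_sdiff hIS hI] at hεr ⊢
    nlinarith
  have hreal := (sq_setAverage_sub_setAverage_mul_measureReal_le hI hIS hSr hεr hg).trans
    (mul_le_mul_of_nonneg_left (setIntegral_sdiff_sub_setAverage_sq_le hI hIS hDI hg) hε0)
  rw [← ofReal_integral_eq_lintegral_ofReal hg.integrable_sq.integrableOn
      (.of_forall fun _ ↦ sq_nonneg _), ← ENNReal.ofReal_mul (by positivity),
    ← ofReal_measureReal (measure_ne_top μ S), ← ENNReal.ofReal_mul (sq_nonneg _)]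
  exact ENNReal.ofReal_le_ofReal (by linarith)

end

theorem Real.two_div_conjExponent_le_one {p : ℝ} (hp0 : 0 < p) (hp2 : p ≤ 2) :
    2 / p.conjExponent ≤ 1 := by
  rw [Real.conjExponent, div_div_eq_mul_div, div_le_one hp0]
  linarith

/-- Comparison between averages over sets `S i` and over large subsets `I i ⊆ S i`:
if `μ(S i \ I i) ≤ ε μ(S i)` for a pairwise disjoint family `{S i}`, then for `g ∈ L²(μ)`,
`Σ_i |⟨g⟩_{S i} − ⟨g⟩_{I i}|² μ(S i) ≤ C(p) ε^{2/p'} ∫ |g|² dμ`, where `p' = p/(p−1)`. -/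
theorem average_comparison_estimate (p : ℝ) (hp1 : 1 < p) (hp2 : p < 2) :
    ∃ C : ℝ, 0 < C ∧
      ∀ (X : Type) (_ : MeasurableSpace X) (μ : Measure X), IsFiniteMeasure μ →
      ∀ ε : ℝ, 0 < ε → ε ≤ 1 / 2 →
      ∀ (ι : Type) (_ : Countable ι) (S : ι → Set X) (In : ι → Set X),
        (∀ i, MeasurableSet (S i)) → Pairwise (Function.onFun Disjoint S) →
        (∀ i, 0 < μ (S i)) →
        (∀ i, MeasurableSet (In i)) → (∀ i, In i ⊆ S i) → (∀ i, 0 < μ (In i)) →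
        (∀ i, μ (S i \ In i) ≤ ENNReal.ofReal ε * μ (S i)) →
        ∀ g : X → ℝ, MemLp g 2 μ →
          ∑' i, ENNReal.ofReal (((⨍ x in S i, g x ∂μ) - ⨍ x in In i, g x ∂μ) ^ 2) * μ (S i)
            ≤ ENNReal.ofReal (C * ε ^ (2 / (p / (p - 1)))) *
              ∫⁻ x, ENNReal.ofReal (g x ^ 2) ∂μ := by
  refine ⟨2, two_pos, ?_⟩
  intro X _ μ _ ε hε hε2 ι _ S In hS hdisj hSpos hIn hInS _ hdiff g hg
  have hε_le_rpow : ε ≤ ε ^ (2 / (p / (p - 1))) :=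
    Real.self_le_rpow_of_le_one hε.le (by linarith)
      (Real.two_div_conjExponent_le_one (by linarith) hp2.le)
  calc ∑' i, ENNReal.ofReal (((⨍ x in S i, g x ∂μ) - ⨍ x in In i, g x ∂μ) ^ 2) * μ (S i)
      ≤ ∑' i, ENNReal.ofReal (2 * ε) * ∫⁻ x in S i, ENNReal.ofReal (g x ^ 2) ∂μ :=
        ENNReal.tsum_le_tsum fun i ↦ ofReal_sq_setAverage_sub_setAverage_mul_le (hIn i) (hInS i)
          (hSpos i) hε.le hε2 (hdiff i) hg
    _ = ENNReal.ofReal (2 * ε) * ∫⁻ x in ⋃ i, S i, ENNReal.ofReal (g x ^ 2) ∂μ := by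
        rw [ENNReal.tsum_mul_left, lintegral_iUnion hS hdisj]
    _ ≤ ENNReal.ofReal (2 * ε ^ (2 / (p / (p - 1)))) * ∫⁻ x, ENNReal.ofReal (g x ^ 2) ∂μ := by
        gcongr
        exact Measure.restrict_le_self
end

section
/- Let n ≥ 1, γ > 0, c₀ > 0, and let η be a finite Borel measure on ℝ^{n+1} with n-polynomial growth with constant c₀. Let {S_i}_{i∈I} be a countable family of pairwise disjoint Borel subsets of ℝ^{n+1}, and let ℓ_i > 0 satisfy diam(S_i) ≤ ℓ_i for each i. Set D(i,j) = ℓ_i + ℓ_j + dist(S_i, S_j) and define g(x) = Σ_{i∈I} ( Σ_{j∈I, j≠i} ℓ_j^{γ} η(S_j) D(i,j)^{−n−γ} ) χ_{S_i}(x). Then ‖g‖_{L²(η)} ≤ C(n,γ) c₀ η(⋃_{i∈I} S_i)^{1/2}, where C(n,γ) depends only on n and γ. -/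
open scoped Classical

open MeasureTheory Metric
open scoped ENNReal

/-!
Test `g` against `ν = f η`. For `y ∈ S j` every `z ∈ S i` satisfies `|y - z| ≤ D(i, j)`, so
`Σ_i D(i, j)^{-n-γ} ν(S i) ≤ ∫ max(ℓ j, |y - z|)^{-n-γ} dν(z) ≲ ℓ j^{-γ} Mν(y)`, where `M` is the
centred maximal function normalised by `c₀ r^n`; the factor `ℓ j^γ` cancels and
`∫ g f dη ≲ c₀ ∫_{⋃ S i} M(f η) dη`. By Besicovitch, `M` is of weak type `(1,1)` with respect to
`η`; splitting `f` at height `t / 2` gives `η{M(f η) > t} ≲ t⁻² ‖f‖₂²`, and integrating over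
`t > s` gives `∫_U M(f η) dη ≲ s η(U) + s⁻¹ ‖f‖₂²`. For `f = min g k`, which has finite norm,
the choice `s ≈ c₀` absorbs `‖f‖₂² ≤ ∫ g f dη` into the left side; then let `k → ∞`.
-/

open Set

lemma volume_restrict_Ioi_setOf_ofReal_lt (a : ℝ≥0∞) :
    volume.restrict (Ioi (0 : ℝ)) {t | ENNReal.ofReal t < a} = a := by
  rw [Measure.restrict_apply' measurableSet_Ioi]
  rcases eq_or_ne a ⊤ with rfl | ha
  · simp
  · have : {t : ℝ | ENNReal.ofReal t < a} ∩ Ioi 0 = Ioo 0 a.toReal := by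
      ext t
      simp only [mem_inter_iff, mem_ofPred_eq, mem_Ioi, mem_Ioo]
      exact ⟨fun h => ⟨h.2, (ENNReal.ofReal_lt_iff_lt_toReal h.2.le ha).1 h.1⟩,
        fun h => ⟨(ENNReal.ofReal_lt_iff_lt_toReal h.1.le ha).2 h.2, h.1⟩⟩
    rw [this, Real.volume_Ioo, sub_zero, ENNReal.ofReal_toReal ha]

lemma lintegral_eq_lintegral_meas_ofReal_lt {β : Type*} [MeasurableSpace β] (μ : Measure β)
    [SFinite μ] {h : β → ℝ≥0∞} (hh : Measurable h) :
    ∫⁻ x, h x ∂μ = ∫⁻ t in Ioi 0, μ {x | ENNReal.ofReal t < h x} := by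
  have hE : MeasurableSet {p : β × ℝ | ENNReal.ofReal p.2 < h p.1} :=
    measurableSet_lt (ENNReal.measurable_ofReal.comp measurable_snd) (hh.comp measurable_fst)
  calc ∫⁻ x, h x ∂μ
      = ∫⁻ x, volume.restrict (Ioi (0 : ℝ)) {t | ENNReal.ofReal t < h x} ∂μ := by
        simp_rw [volume_restrict_Ioi_setOf_ofReal_lt]
    _ = (μ.prod (volume.restrict (Ioi 0))) {p : β × ℝ | ENNReal.ofReal p.2 < h p.1} :=
        (Measure.prod_apply hE).symm
    _ = ∫⁻ t in Ioi 0, μ {x | ENNReal.ofReal t < h x} := Measure.prod_apply_symm hE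

lemma lintegral_Ioi_ofReal_rpow {a s : ℝ} (ha : 0 < a) (hs : s < -1) :
    ∫⁻ t in Ioi a, ENNReal.ofReal (t ^ s) = ENNReal.ofReal (a ^ (s + 1) / (-(s + 1))) := by
  rw [← ofReal_integral_eq_lintegral_ofReal (integrableOn_Ioi_rpow_of_lt hs ha)
    ((ae_restrict_mem measurableSet_Ioi).mono fun t ht => Real.rpow_nonneg (ha.trans ht).le _),
    integral_Ioi_rpow_of_lt hs ha, div_neg, neg_div]

lemma lintegral_Ioi_inv_sq {a : ℝ} (ha : 0 < a) :
    ∫⁻ t in Ioi a, (ENNReal.ofReal t)⁻¹ ^ 2 = (ENNReal.ofReal a)⁻¹ := by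
  have h : ∀ t ∈ Ioi a, (ENNReal.ofReal t)⁻¹ ^ 2 = ENNReal.ofReal (t ^ (-2 : ℝ)) := fun t ht => by
    rw [← ENNReal.ofReal_inv_of_pos (ha.trans ht),
      ← ENNReal.ofReal_pow (inv_nonneg.2 (ha.trans ht).le), Real.rpow_neg (ha.trans ht).le,
      inv_pow, Real.rpow_two]
  rw [setLIntegral_congr_fun measurableSet_Ioi h, lintegral_Ioi_ofReal_rpow ha (by norm_num),
    ← ENNReal.ofReal_inv_of_pos ha]
  norm_num [Real.rpow_neg_one]

lemma ofReal_rpow_neg_eq_lintegral_Ioi {d p : ℝ} (hd : 0 < d) (hp : 0 < p) :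
    ENNReal.ofReal (d ^ (-p)) = ∫⁻ t in Ioi d, ENNReal.ofReal (p * t ^ (-p - 1)) := by
  simp_rw [ENNReal.ofReal_mul hp.le]
  rw [lintegral_const_mul _ (by fun_prop), lintegral_Ioi_ofReal_rpow hd (by linarith),
    ← ENNReal.ofReal_mul hp.le, sub_add_cancel, neg_neg]
  field_simp

lemma lintegral_max_dist_rpow_neg_le {α : Type*} [PseudoMetricSpace α] [MeasurableSpace α]
    [OpensMeasurableSpace α] (ν : Measure α) [SFinite ν] {y : α} {n : ℕ} {b c₀ γ : ℝ}
    {M : ℝ≥0∞} (hb : 0 < b) (hc₀ : 0 ≤ c₀) (hγ : 0 < γ)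
    (hM : ∀ r, b < r → ν (ball y r) ≤ M * ENNReal.ofReal (c₀ * r ^ n)) :
    ∫⁻ z, ENNReal.ofReal (max b (dist y z) ^ (-(n + γ))) ∂ν ≤
      ENNReal.ofReal ((n + γ) / γ * c₀ * b ^ (-γ)) * M := by
  set p : ℝ := n + γ
  have hp : 0 < p := by positivity
  set w : ℝ → ℝ≥0∞ := fun t => ENNReal.ofReal (p * t ^ (-p - 1))
  have hw : Measurable w := by fun_prop
  have hslice : ∀ z, ENNReal.ofReal (max b (dist y z) ^ (-p)) =
      ∫⁻ t in Ioi b, (ball y t).indicator (fun _ => w t) z := fun z => by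
    rw [ofReal_rpow_neg_eq_lintegral_Ioi (lt_max_of_lt_left hb) hp, max_comm, ← Ioi_inter_Ioi,
      ← Measure.restrict_restrict measurableSet_Ioi, ← lintegral_indicator measurableSet_Ioi]
    congr 1
    ext t
    simp [w, indicator_apply, dist_comm]
  calc ∫⁻ z, ENNReal.ofReal (max b (dist y z) ^ (-p)) ∂ν
      = ∫⁻ t in Ioi b, ∫⁻ z, (ball y t).indicator (fun _ => w t) z ∂ν := by
        simp_rw [hslice]
        refine lintegral_lintegral_swap (Measurable.aemeasurable ?_)
        change Measurable fun q : α × ℝ => (ball y q.2).indicator (fun _ => w q.2) q.1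
        simp only [indicator_apply, mem_ball]
        exact Measurable.ite (measurableSet_lt
          ((continuous_id.dist continuous_const).measurable.comp measurable_fst) measurable_snd)
          (hw.comp measurable_snd) measurable_const
    _ = ∫⁻ t in Ioi b, ν (ball y t) * w t := by
        simp_rw [lintegral_indicator_const measurableSet_ball, mul_comm]
    _ ≤ ∫⁻ t in Ioi b, M * ENNReal.ofReal (p * c₀ * t ^ (-γ - 1)) := by
        refine setLIntegral_mono' measurableSet_Ioi fun t ht => ?_
        have ht0 : 0 < t := hb.trans ht
        calc ν (ball y t) * w t ≤ M * ENNReal.ofReal (c₀ * t ^ n) * w t := by gcongr; exact hM t ht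
          _ = M * ENNReal.ofReal (p * c₀ * t ^ (-γ - 1)) := by
            rw [mul_assoc, ← ENNReal.ofReal_mul (by positivity)]
            congr 2
            rw [← Real.rpow_natCast, mul_mul_mul_comm, ← Real.rpow_add ht0]
            simp only [p]
            ring_nf
    _ = ENNReal.ofReal (p / γ * c₀ * b ^ (-γ)) * M := by
        simp_rw [ENNReal.ofReal_mul (by positivity : 0 ≤ p * c₀)]
        rw [lintegral_const_mul _ (by fun_prop), lintegral_const_mul _ (by fun_prop),
          lintegral_Ioi_ofReal_rpow hb (by linarith), ← ENNReal.ofReal_mul (by positivity),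
          mul_comm M, sub_add_cancel]
        congr 2
        field_simp

lemma le_max_one_of_pow_le {n : ℕ} {r Q : ℝ} (hn : 1 ≤ n) (h : r ^ n ≤ Q) :
    r ≤ max 1 Q := by
  rcases le_or_gt r 1 with h1 | h1
  · exact h1.trans (le_max_left _ _)
  · exact ((le_self_pow₀ h1.le (by omega)).trans h).trans (le_max_right _ _)

lemma edist_le_ediam_add_ediam_add_iInf_infEDist {α : Type*} [PseudoEMetricSpace α]
    {A B : Set α} {z y : α} (hz : z ∈ A) (hy : y ∈ B) :
    edist z y ≤ ediam A + ediam B + ⨅ x ∈ A, infEDist x B := by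
  simp only [infEDist, ENNReal.add_iInf]
  refine le_iInf₂ fun x hx => le_iInf₂ fun w hw => ?_
  calc edist z y ≤ edist z x + edist w y + edist x w := by
        rw [add_right_comm]; exact edist_triangle4 _ _ _ _
    _ ≤ _ := by gcongr; exacts [edist_le_ediam_of_mem hz hx, edist_le_ediam_of_mem hw hy]

lemma le_mul_of_forall_le_mul_add_inv_mul {T u : ℝ≥0∞} {k a : ℝ} (hk : 0 < k) (ha : 0 ≤ a)
    (hT : T ≠ ⊤) (h : ∀ s : ℝ, 0 < s → T ≤ ENNReal.ofReal k *
      (ENNReal.ofReal s * u + ENNReal.ofReal a * (ENNReal.ofReal s)⁻¹ * T)) :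
    T ≤ ENNReal.ofReal (4 * k ^ 2 * (a + 1)) * u := by
  -- with `s = 2 k (a + 1)` the coefficient of `T` on the right is at most `1 / 2`
  set s := 2 * k * (a + 1)
  have hs : 0 < s := by positivity
  have hcoeff : ENNReal.ofReal k * (ENNReal.ofReal a * (ENNReal.ofReal s)⁻¹) ≤ 2⁻¹ := by
    rw [← ENNReal.ofReal_inv_of_pos hs, ← ENNReal.ofReal_mul ha, ← ENNReal.ofReal_mul hk.le,
      ← ENNReal.ofReal_ofNat 2, ← ENNReal.ofReal_inv_of_pos two_pos]
    refine ENNReal.ofReal_le_ofReal ?_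
    rw [show k * (a * s⁻¹) = a / (2 * (a + 1)) by field_simp [s]; ring]
    rw [div_le_iff₀ (by positivity)]
    linarith
  have hhalf : T ≤ ENNReal.ofReal (2 * k ^ 2 * (a + 1)) * u + T / 2 :=
    calc T ≤ _ := h s hs
      _ = ENNReal.ofReal k * ENNReal.ofReal s * u +
          ENNReal.ofReal k * (ENNReal.ofReal a * (ENNReal.ofReal s)⁻¹) * T := by ring
      _ ≤ ENNReal.ofReal (2 * k ^ 2 * (a + 1)) * u + 2⁻¹ * T := by
          rw [← ENNReal.ofReal_mul hk.le, show k * s = 2 * k ^ 2 * (a + 1) by ring]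
          gcongr
      _ = ENNReal.ofReal (2 * k ^ 2 * (a + 1)) * u + T / 2 := by rw [ENNReal.div_eq_inv_mul]
  have h2 : T / 2 ≤ ENNReal.ofReal (2 * k ^ 2 * (a + 1)) * u := by
    rw [← ENNReal.sub_half hT]
    exact tsub_le_iff_right.2 hhalf
  calc T = 2 * (T / 2) := (ENNReal.mul_div_cancel two_ne_zero ENNReal.ofNat_ne_top).symm
    _ ≤ 2 * (ENNReal.ofReal (2 * k ^ 2 * (a + 1)) * u) := by gcongr
    _ = ENNReal.ofReal (4 * k ^ 2 * (a + 1)) * u := by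
        rw [← mul_assoc, ← ENNReal.ofReal_ofNat 2, ← ENNReal.ofReal_mul zero_le_two]
        ring_nf

section MaximalFunction

variable {α : Type*} [MetricSpace α] [MeasurableSpace α]

/-- The centred maximal function of `ν`, normalised by the growth gauge `c₀ r ^ n` instead of
by the measure of the ball. -/
noncomputable def maximalFunction (c₀ : ℝ) (n : ℕ) (ν : Measure α) (y : α) : ℝ≥0∞ :=
  ⨆ r > (0 : ℝ), ν (ball y r) / ENNReal.ofReal (c₀ * r ^ n)

variable {c₀ : ℝ} {n : ℕ}

lemma measure_ball_le_maximalFunction (hc₀ : 0 < c₀) (ν : Measure α) (y : α) {r : ℝ}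
    (hr : 0 < r) : ν (ball y r) ≤ maximalFunction c₀ n ν y * ENNReal.ofReal (c₀ * r ^ n) := by
  have hD : ENNReal.ofReal (c₀ * r ^ n) ≠ 0 := by positivity
  rw [← ENNReal.div_le_iff hD ENNReal.ofReal_ne_top]
  exact le_iSup₂_of_le (f := fun r (_ : r > (0 : ℝ)) =>
    ν (ball y r) / ENNReal.ofReal (c₀ * r ^ n)) r hr le_rfl

lemma lowerSemicontinuous_measure_ball [OpensMeasurableSpace α] (ν : Measure α) (r : ℝ) :
    LowerSemicontinuous fun y => ν (ball y r) := by
  intro y c hc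
  have hU : ⋃ k : ℕ, ball y (r - 1 / (k + 1)) = ball y r := by
    ext z
    simp only [mem_iUnion, mem_ball]
    refine ⟨fun ⟨k, hk⟩ => hk.trans_le (sub_le_self _ (by positivity)), fun hz => ?_⟩
    obtain ⟨k, hk⟩ := exists_nat_one_div_lt (sub_pos.2 hz)
    exact ⟨k, by linarith⟩
  have hmono : Monotone fun k : ℕ => ball y (r - 1 / (k + 1)) := fun k l hkl =>
    ball_subset_ball (by gcongr)
  obtain ⟨k, hk⟩ := ((tendsto_measure_iUnion_atTop hmono).eventually
    (lt_mem_nhds (show c < ν (⋃ k : ℕ, ball y (r - 1 / (k + 1))) by rwa [hU]))).exists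
  filter_upwards [ball_mem_nhds y (by positivity : (0 : ℝ) < 1 / (k + 1))] with y' hy'
  refine hk.trans_le (measure_mono fun z hz => ?_)
  rw [mem_ball] at hz hy' ⊢
  linarith [dist_triangle z y y', dist_comm y y']

lemma measurable_maximalFunction [OpensMeasurableSpace α] (hc₀ : 0 < c₀) (ν : Measure α) :
    Measurable (maximalFunction c₀ n ν) := by
  refine (lowerSemicontinuous_biSup fun r hr => ?_).measurable
  have hD : ENNReal.ofReal (c₀ * r ^ n) ≠ 0 := by simp only [gt_iff_lt] at hr; positivity
  exact (ENNReal.continuous_div_const _ hD).comp_lowerSemicontinuous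
    (lowerSemicontinuous_measure_ball ν r) fun _ _ h => ENNReal.div_le_div_right h _

variable [OpensMeasurableSpace α]

lemma maximalFunction_withDensity_le_add (hc₀ : 0 < c₀) {η : Measure α}
    (hgrow : ∀ x r, 0 < r → η (ball x r) ≤ ENNReal.ofReal (c₀ * r ^ n))
    {f f₁ : α → ℝ≥0∞} (hf₁ : Measurable f₁) {s : ℝ≥0∞} (hf : ∀ x, f x ≤ f₁ x + s) (y : α) :
    maximalFunction c₀ n (η.withDensity f) y ≤ maximalFunction c₀ n (η.withDensity f₁) y + s := by
  refine iSup₂_le fun r hr => ENNReal.div_le_of_le_mul ?_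
  rw [withDensity_apply _ measurableSet_ball, add_mul]
  calc ∫⁻ x in ball y r, f x ∂η ≤ ∫⁻ x in ball y r, (f₁ x + s) ∂η := lintegral_mono hf
    _ = (η.withDensity f₁) (ball y r) + s * η (ball y r) := by
      rw [lintegral_add_left hf₁, setLIntegral_const, withDensity_apply _ measurableSet_ball]
    _ ≤ _ := add_le_add (measure_ball_le_maximalFunction hc₀ _ y hr)
      (mul_le_mul_right (hgrow y r hr) s)

variable [SecondCountableTopology α]

lemma measure_le_of_forall_measure_ball_le {N : ℕ} {τ : ℝ} (hτ : 1 < τ)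
    (hN : IsEmpty (Besicovitch.SatelliteConfig α N τ)) (η ν : Measure α) {E : Set α}
    {r : α → ℝ} {R : ℝ} (hr : ∀ y ∈ E, r y ∈ Ioc 0 R) {K : ℝ≥0∞}
    (hK : ∀ y ∈ E, η (ball y (r y)) ≤ K * ν (ball y (r y))) :
    η E ≤ N * K * ν univ := by
  let pkg : Besicovitch.BallPackage E α :=
    { c := (↑)
      r := fun y => r y
      rpos := fun y => (hr y y.2).1
      r_bound := R
      r_le := fun y => (hr y y.2).2 }
  obtain ⟨s, hs, hcov⟩ := Besicovitch.exist_disjoint_covering_families hτ hN pkg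
  have hcount : ∀ i, (s i).Countable := fun i =>
    ((hs i).mono fun _ => ball_subset_closedBall).countable_of_isOpen (fun _ _ => isOpen_ball)
      fun j _ => nonempty_ball.2 (hr j j.2).1
  have hfamily : ∀ i, η (⋃ j ∈ s i, ball (j : α) (r j)) ≤ K * ν univ := fun i =>
    calc η (⋃ j ∈ s i, ball (j : α) (r j))
        ≤ ∑' j : s i, η (ball (j : α) (r j)) := measure_biUnion_le _ (hcount i) _
      _ ≤ ∑' j : s i, K * ν (ball (j : α) (r j)) :=
        ENNReal.tsum_le_tsum fun j => hK j j.1.2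
      _ = K * ν (⋃ j ∈ s i, ball (j : α) (r j)) := by
        rw [ENNReal.tsum_mul_left, measure_biUnion (hcount i)
          ((hs i).mono fun _ => ball_subset_closedBall) fun _ _ => measurableSet_ball]
      _ ≤ K * ν univ := by gcongr; exact subset_univ _
  calc η E ≤ η (⋃ i : Fin N, ⋃ j ∈ s i, ball (j : α) (r j)) :=
        measure_mono (by simpa [pkg] using hcov)
    _ ≤ ∑ i : Fin N, η (⋃ j ∈ s i, ball (j : α) (r j)) := measure_iUnion_fintype_le _ _
    _ ≤ ∑ _i : Fin N, K * ν univ := Finset.sum_le_sum fun i _ => hfamily i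
    _ = N * K * ν univ := by simp [mul_assoc]

lemma measure_lt_maximalFunction_le {N : ℕ} {τ : ℝ} (hτ : 1 < τ)
    (hN : IsEmpty (Besicovitch.SatelliteConfig α N τ)) (hc₀ : 0 < c₀) (hn : 1 ≤ n)
    {η : Measure α} (hgrow : ∀ x r, 0 < r → η (ball x r) ≤ ENNReal.ofReal (c₀ * r ^ n))
    (ν : Measure α) [IsFiniteMeasure ν] {t : ℝ} (ht : 0 < t) :
    η {y | ENNReal.ofReal t < maximalFunction c₀ n ν y} ≤ N * (ENNReal.ofReal t)⁻¹ * ν univ := by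
  have hpick : ∀ y ∈ {y | ENNReal.ofReal t < maximalFunction c₀ n ν y}, ∃ r > 0,
      ENNReal.ofReal t * ENNReal.ofReal (c₀ * r ^ n) < ν (ball y r) := by
    intro y hy
    obtain ⟨r, hr, hy⟩ : ∃ r > 0, ENNReal.ofReal t < ν (ball y r) / ENNReal.ofReal (c₀ * r ^ n) :=
      by simpa only [mem_ofPred_eq, maximalFunction, lt_iSup_iff, exists_prop] using hy
    exact ⟨r, hr, (ENNReal.lt_div_iff_mul_lt (Or.inl (by positivity))
      (Or.inl ENNReal.ofReal_ne_top)).1 hy⟩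
  choose! r hr hrν using hpick
  refine measure_le_of_forall_measure_ball_le hτ hN η ν
    (R := max 1 ((ν univ).toReal / (t * c₀))) (fun y hy => ⟨hr y hy, ?_⟩) fun y hy => ?_
  · refine le_max_one_of_pow_le hn ((le_div_iff₀ (by positivity)).2 ?_)
    have := (hrν y hy).trans_le (measure_mono (subset_univ _))
    rw [← ENNReal.ofReal_mul ht.le, ENNReal.ofReal_lt_iff_lt_toReal
      (mul_nonneg ht.le (mul_nonneg hc₀.le (pow_nonneg (hr y hy).le _))) (measure_ne_top ν _)]
      at this
    linarith
  · refine (hgrow y _ (hr y hy)).trans ?_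
    rw [← ENNReal.div_eq_inv_mul, ENNReal.le_div_iff_mul_le (Or.inl (by positivity))
      (Or.inl ENNReal.ofReal_ne_top), mul_comm]
    exact (hrν y hy).le

lemma measure_lt_maximalFunction_withDensity_le {N : ℕ} {τ : ℝ} (hτ : 1 < τ)
    (hN : IsEmpty (Besicovitch.SatelliteConfig α N τ)) (hc₀ : 0 < c₀) (hn : 1 ≤ n)
    {η : Measure α} (hgrow : ∀ x r, 0 < r → η (ball x r) ≤ ENNReal.ofReal (c₀ * r ^ n))
    {f : α → ℝ≥0∞} (hf : Measurable f) (hf2 : ∫⁻ x, f x ^ 2 ∂η ≠ ⊤) {t : ℝ} (ht : 0 < t) :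
    η {y | ENNReal.ofReal t < maximalFunction c₀ n (η.withDensity f) y} ≤
      4 * N * (ENNReal.ofReal t)⁻¹ ^ 2 * ∫⁻ x, f x ^ 2 ∂η := by
  have hs_inv : (ENNReal.ofReal (t / 2))⁻¹ = 2 * (ENNReal.ofReal t)⁻¹ := by
    rw [ENNReal.ofReal_div_of_pos two_pos, ENNReal.ofReal_ofNat, ENNReal.inv_div
      (Or.inr ENNReal.ofReal_ne_top) (Or.inr (by positivity)), ENNReal.div_eq_inv_mul, mul_comm]
  set s := ENNReal.ofReal (t / 2)
  have hs : s ≠ 0 := by positivity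
  -- only the part of `f` above `t / 2` can push the maximal function above `t`
  set f₁ := {x | s < f x}.indicator f
  have hf₁ : Measurable f₁ := hf.indicator (measurableSet_lt measurable_const hf)
  have hf_le : ∀ x, f x ≤ f₁ x + s := fun x => by
    by_cases hx : s < f x
    · simp [f₁, hx]
    · simpa [f₁, hx] using le_of_not_gt hx
  have hf₁_le : ∀ x, f₁ x ≤ s⁻¹ * f x ^ 2 := fun x => by
    by_cases hx : s < f x
    · simp only [f₁, indicator_of_mem (show x ∈ {x | s < f x} from hx)]
      calc f x = s⁻¹ * (s * f x) := by rw [← mul_assoc, ENNReal.inv_mul_cancel hs (by simp [s]),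
            one_mul]
        _ ≤ s⁻¹ * f x ^ 2 := by rw [sq]; gcongr
    · simp [f₁, hx]
  have hint : ∫⁻ x, f₁ x ∂η ≤ s⁻¹ * ∫⁻ x, f x ^ 2 ∂η := by
    rw [← lintegral_const_mul _ (hf.pow_const 2)]
    exact lintegral_mono hf₁_le
  have : IsFiniteMeasure (η.withDensity f₁) := isFiniteMeasure_withDensity
    (ne_top_of_le_ne_top (ENNReal.mul_ne_top (by simp [s, ht]) hf2) hint)
  have hsub : {y | ENNReal.ofReal t < maximalFunction c₀ n (η.withDensity f) y} ⊆
      {y | s < maximalFunction c₀ n (η.withDensity f₁) y} := fun y hy => by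
    by_contra hle
    refine (not_le.2 hy) ((maximalFunction_withDensity_le_add hc₀ hgrow hf₁ hf_le y).trans ?_)
    calc _ ≤ s + s := add_le_add_left (not_lt.1 hle) s
      _ = ENNReal.ofReal t := by rw [← ENNReal.ofReal_add (by positivity) (by positivity)]; norm_num
  calc _ ≤ η {y | s < maximalFunction c₀ n (η.withDensity f₁) y} := measure_mono hsub
    _ ≤ N * s⁻¹ * (η.withDensity f₁) univ :=
      measure_lt_maximalFunction_le hτ hN hc₀ hn hgrow _ (by positivity)
    _ ≤ N * s⁻¹ * (s⁻¹ * ∫⁻ x, f x ^ 2 ∂η) := by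
      rw [withDensity_apply _ MeasurableSet.univ, Measure.restrict_univ]; gcongr
    _ = 4 * N * (ENNReal.ofReal t)⁻¹ ^ 2 * ∫⁻ x, f x ^ 2 ∂η := by
      rw [hs_inv]; ring

lemma setLIntegral_maximalFunction_withDensity_le {N : ℕ} {τ : ℝ} (hτ : 1 < τ)
    (hN : IsEmpty (Besicovitch.SatelliteConfig α N τ)) (hc₀ : 0 < c₀) (hn : 1 ≤ n)
    {η : Measure α} [SFinite η]
    (hgrow : ∀ x r, 0 < r → η (ball x r) ≤ ENNReal.ofReal (c₀ * r ^ n))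
    {f : α → ℝ≥0∞} (hf : Measurable f) (hf2 : ∫⁻ x, f x ^ 2 ∂η ≠ ⊤) (U : Set α) {t₀ : ℝ}
    (ht₀ : 0 < t₀) :
    ∫⁻ y in U, maximalFunction c₀ n (η.withDensity f) y ∂η ≤
      ENNReal.ofReal t₀ * η U + 4 * N * (ENNReal.ofReal t₀)⁻¹ * ∫⁻ x, f x ^ 2 ∂η := by
  rw [lintegral_eq_lintegral_meas_ofReal_lt _ (measurable_maximalFunction hc₀ _),
    ← Ioc_union_Ioi_eq_Ioi ht₀.le, lintegral_union measurableSet_Ioi Ioc_disjoint_Ioi_same]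
  gcongr
  · calc _ ≤ ∫⁻ _ in Ioc 0 t₀, η U :=
          lintegral_mono fun t => (measure_mono (subset_univ _)).trans_eq (by simp)
      _ = ENNReal.ofReal t₀ * η U := by
          rw [setLIntegral_const, Real.volume_Ioc, sub_zero, mul_comm]
  · calc _ ≤ ∫⁻ t in Ioi t₀, (ENNReal.ofReal t)⁻¹ ^ 2 * (4 * N * ∫⁻ x, f x ^ 2 ∂η) :=
          setLIntegral_mono' measurableSet_Ioi fun t ht =>
            (Measure.restrict_apply_le _ _).trans <|
              (measure_lt_maximalFunction_withDensity_le hτ hN hc₀ hn hgrow hf hf2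
                (ht₀.trans ht)).trans_eq (by ring)
      _ = 4 * N * (ENNReal.ofReal t₀)⁻¹ * ∫⁻ x, f x ^ 2 ∂η := by
          rw [lintegral_mul_const' _ _ (by finiteness), lintegral_Ioi_inv_sq ht₀]; ring

end MaximalFunction

section AuxiliaryFunction

variable {α ι : Type*} [MetricSpace α]

noncomputable def separation (S : ι → Set α) (ℓ : ι → ℝ) (i j : ι) : ℝ≥0∞ :=
  ENNReal.ofReal (ℓ i) + ENNReal.ofReal (ℓ j) + ⨅ x ∈ S i, infEDist x (S j)

variable {S : ι → Set α} {ℓ : ι → ℝ}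

lemma ofReal_max_dist_le_separation (hdiam : ∀ i, ediam (S i) ≤ ENNReal.ofReal (ℓ i)) {i j : ι}
    {z y : α} (hz : z ∈ S i) (hy : y ∈ S j) :
    ENNReal.ofReal (max (ℓ j) (dist y z)) ≤ separation S ℓ i j := by
  rw [ENNReal.ofReal_max, ← edist_dist, edist_comm]
  refine max_le (le_add_self.trans le_self_add) ?_
  calc edist z y ≤ ediam (S i) + ediam (S j) + ⨅ x ∈ S i, infEDist x (S j) :=
        edist_le_ediam_add_ediam_add_iInf_infEDist hz hy
    _ ≤ separation S ℓ i j := by unfold separation; gcongr <;> apply hdiam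

variable [MeasurableSpace α]

noncomputable def auxiliaryCoeff (η : Measure α) (S : ι → Set α) (ℓ : ι → ℝ) (n : ℕ) (γ : ℝ)
    (i : ι) : ℝ≥0∞ :=
  ∑' j, if j = i then 0 else
    ENNReal.ofReal (ℓ j ^ γ) * η (S j) * separation S ℓ i j ^ (-(n : ℝ) - γ)

noncomputable def auxiliaryFunction (η : Measure α) (S : ι → Set α) (ℓ : ι → ℝ) (n : ℕ)
    (γ : ℝ) (x : α) : ℝ≥0∞ :=
  ∑' i, (S i).indicator (fun _ => auxiliaryCoeff η S ℓ n γ i) x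

variable [OpensMeasurableSpace α] [Countable ι] {c₀ γ : ℝ} {n : ℕ}

lemma tsum_separation_rpow_neg_mul_le (hc₀ : 0 < c₀) (hγ : 0 < γ) (ν : Measure α) [SFinite ν]
    (hSm : ∀ i, MeasurableSet (S i)) (hSd : Pairwise (Function.onFun Disjoint S))
    (hℓ : ∀ i, 0 < ℓ i) (hdiam : ∀ i, ediam (S i) ≤ ENNReal.ofReal (ℓ i)) {j : ι} {y : α}
    (hy : y ∈ S j) :
    ∑' i, separation S ℓ i j ^ (-(n : ℝ) - γ) * ν (S i) ≤
      ENNReal.ofReal ((n + γ) / γ * c₀ * ℓ j ^ (-γ)) * maximalFunction c₀ n ν y := by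
  set h : α → ℝ≥0∞ := fun z => ENNReal.ofReal (max (ℓ j) (dist y z) ^ (-(n + γ)))
  calc _ ≤ ∑' i, ∫⁻ z in S i, h z ∂ν := ENNReal.tsum_le_tsum fun i => by
        rw [← setLIntegral_const]
        refine setLIntegral_mono' (hSm i) fun z hz => ?_
        dsimp only [h]
        rw [← neg_add', ← ENNReal.ofReal_rpow_of_pos (lt_max_of_lt_left (hℓ j)),
          ENNReal.rpow_neg, ENNReal.rpow_neg]
        exact ENNReal.inv_le_inv.2 (ENNReal.rpow_le_rpow
          (ofReal_max_dist_le_separation hdiam hz hy) (by positivity))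
    _ = ∫⁻ z in ⋃ i, S i, h z ∂ν := (lintegral_iUnion hSm hSd _).symm
    _ ≤ ∫⁻ z, h z ∂ν := setLIntegral_le_lintegral _ _
    _ ≤ _ := lintegral_max_dist_rpow_neg_le ν (hℓ j) hc₀.le hγ fun r hr =>
        measure_ball_le_maximalFunction hc₀ ν y ((hℓ j).trans hr)

lemma lintegral_auxiliaryFunction_le (hc₀ : 0 < c₀) (hγ : 0 < γ) (η ν : Measure α) [SFinite ν]
    (hSm : ∀ i, MeasurableSet (S i)) (hSd : Pairwise (Function.onFun Disjoint S))
    (hℓ : ∀ i, 0 < ℓ i) (hdiam : ∀ i, ediam (S i) ≤ ENNReal.ofReal (ℓ i)) :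
    ∫⁻ x, auxiliaryFunction η S ℓ n γ x ∂ν ≤
      ENNReal.ofReal ((n + γ) / γ * c₀) * ∫⁻ y in ⋃ i, S i, maximalFunction c₀ n ν y ∂η := by
  set κ := ENNReal.ofReal ((n + γ) / γ * c₀)
  set M := maximalFunction c₀ n ν
  have hcol : ∀ j, ∑' i, (if j = i then 0 else ENNReal.ofReal (ℓ j ^ γ) * η (S j) *
      separation S ℓ i j ^ (-(n : ℝ) - γ)) * ν (S i) ≤ κ * ∫⁻ y in S j, M y ∂η := fun j =>
    calc _ ≤ ∑' i, ENNReal.ofReal (ℓ j ^ γ) * η (S j) *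
          (separation S ℓ i j ^ (-(n : ℝ) - γ) * ν (S i)) := ENNReal.tsum_le_tsum fun i => by
          split_ifs
          · simp
          · rw [mul_assoc]
      _ = ∫⁻ _ in S j, ENNReal.ofReal (ℓ j ^ γ) *
          ∑' i, separation S ℓ i j ^ (-(n : ℝ) - γ) * ν (S i) ∂η := by
          rw [ENNReal.tsum_mul_left, setLIntegral_const]; ring
      _ ≤ ∫⁻ y in S j, ENNReal.ofReal (ℓ j ^ γ) *
          (ENNReal.ofReal ((n + γ) / γ * c₀ * ℓ j ^ (-γ)) * M y) ∂η :=
          setLIntegral_mono' (hSm j) fun y hy => by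
            gcongr; exact tsum_separation_rpow_neg_mul_le hc₀ hγ ν hSm hSd hℓ hdiam hy
      _ = κ * ∫⁻ y in S j, M y ∂η := by
          rw [← lintegral_const_mul _ (measurable_maximalFunction hc₀ ν)]
          congr 1
          funext y
          rw [← mul_assoc, ← ENNReal.ofReal_mul (Real.rpow_nonneg (hℓ j).le _)]
          congr 2
          rw [Real.rpow_neg (hℓ j).le]
          field_simp [(Real.rpow_pos_of_pos (hℓ j) γ).ne']
  calc ∫⁻ x, auxiliaryFunction η S ℓ n γ x ∂ν
      = ∑' i, auxiliaryCoeff η S ℓ n γ i * ν (S i) := by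
        unfold auxiliaryFunction
        rw [lintegral_tsum fun i =>
          (measurable_const.indicator (hSm i)).aemeasurable]
        simp_rw [lintegral_indicator_const (hSm _)]
    _ = ∑' j, ∑' i, (if j = i then 0 else ENNReal.ofReal (ℓ j ^ γ) * η (S j) *
          separation S ℓ i j ^ (-(n : ℝ) - γ)) * ν (S i) := by
        simp_rw [auxiliaryCoeff, ← ENNReal.tsum_mul_right]
        exact ENNReal.tsum_comm
    _ ≤ ∑' j, κ * ∫⁻ y in S j, M y ∂η := ENNReal.tsum_le_tsum hcol
    _ = κ * ∫⁻ y in ⋃ i, S i, M y ∂η := by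
        rw [ENNReal.tsum_mul_left, lintegral_iUnion hSm hSd]

end AuxiliaryFunction

section L2Bound

variable {α ι : Type*} [MetricSpace α] [MeasurableSpace α] [OpensMeasurableSpace α]
  [SecondCountableTopology α] [Countable ι] {S : ι → Set α} {ℓ : ι → ℝ} {c₀ γ : ℝ} {n : ℕ}

lemma lintegral_auxiliaryFunction_sq_le {N : ℕ} {τ : ℝ} (hτ : 1 < τ)
    (hN : IsEmpty (Besicovitch.SatelliteConfig α N τ)) (hc₀ : 0 < c₀) (hn : 1 ≤ n)
    (hγ : 0 < γ) {η : Measure α} [IsFiniteMeasure η]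
    (hgrow : ∀ x r, 0 < r → η (ball x r) ≤ ENNReal.ofReal (c₀ * r ^ n))
    (hSm : ∀ i, MeasurableSet (S i)) (hSd : Pairwise (Function.onFun Disjoint S))
    (hℓ : ∀ i, 0 < ℓ i) (hdiam : ∀ i, ediam (S i) ≤ ENNReal.ofReal (ℓ i)) :
    ∫⁻ x, auxiliaryFunction η S ℓ n γ x ^ 2 ∂η ≤
      ENNReal.ofReal (4 * ((n + γ) / γ * c₀) ^ 2 * (4 * N + 1)) * η (⋃ i, S i) := by
  set g := auxiliaryFunction η S ℓ n γ
  have hg : Measurable g := Measurable.tsum fun i => measurable_const.indicator (hSm i)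
  -- the truncations `min g k` have finite `L²` norm, so the estimate can absorb them
  have htrunc : ∀ k : ℕ, ∫⁻ x, min (g x) k ^ 2 ∂η ≤
      ENNReal.ofReal (4 * ((n + γ) / γ * c₀) ^ 2 * (4 * N + 1)) * η (⋃ i, S i) := fun k => by
    set f := fun x => min (g x) k
    change ∫⁻ x, f x ^ 2 ∂η ≤ _
    have hf : Measurable f := hg.min measurable_const
    have hf2 : ∫⁻ x, f x ^ 2 ∂η ≠ ⊤ := by
      refine ne_top_of_le_ne_top (b := ∫⁻ _, (k : ℝ≥0∞) ^ 2 ∂η) ?_ ?_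
      · rw [lintegral_const]; exact ENNReal.mul_ne_top (by simp) (measure_ne_top _ _)
      · exact lintegral_mono fun x => by gcongr; exact min_le_right _ _
    refine le_mul_of_forall_le_mul_add_inv_mul (by positivity) (by positivity) hf2 fun s hs => ?_
    calc ∫⁻ x, f x ^ 2 ∂η ≤ ∫⁻ x, (f * g) x ∂η :=
          lintegral_mono fun x => by rw [sq, Pi.mul_apply]; gcongr; exact min_le_left _ _
      _ = ∫⁻ x, g x ∂(η.withDensity f) := (lintegral_withDensity_eq_lintegral_mul _ hf hg).symm
      _ ≤ ENNReal.ofReal ((n + γ) / γ * c₀) *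
          ∫⁻ y in ⋃ i, S i, maximalFunction c₀ n (η.withDensity f) y ∂η :=
          lintegral_auxiliaryFunction_le hc₀ hγ η _ hSm hSd hℓ hdiam
      _ ≤ _ := by
          gcongr
          refine (setLIntegral_maximalFunction_withDensity_le hτ hN hc₀ hn hgrow hf hf2 _
            hs).trans_eq ?_
          rw [ENNReal.ofReal_mul (by norm_num), ENNReal.ofReal_natCast, ENNReal.ofReal_ofNat]
  have hsq : ∀ x, g x ^ 2 = ⨆ k : ℕ, min (g x) k ^ 2 := fun x => by
    rw [← ENNReal.iSup_pow, ← inf_iSup_eq, ENNReal.iSup_natCast, inf_top_eq]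
  simp_rw [hsq]
  rw [lintegral_iSup (fun k => (hg.min measurable_const).pow_const 2)
    fun k l hkl x => by dsimp only; gcongr]
  exact iSup_le htrunc

end L2Bound

/-- The `L²(η)` bound for the auxiliary function
`g = Σ_i ( Σ_{j≠i} ℓ_j^γ η(S_j) D(i,j)^{−n−γ} ) χ_{S_i}`, where
`D(i,j) = ℓ_i + ℓ_j + dist(S_i, S_j)`, for a measure `η` on `ℝ^{n+1}` with `n`-polynomial growth
with constant `c₀`: one has `‖g‖_{L²(η)} ≤ C(n,γ) c₀ η(⋃ S_i)^{1/2}` (stated here with both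
sides squared). -/
theorem auxiliary_function_L2_bound (n : ℕ) (hn : 1 ≤ n) (γ : ℝ) (hγ : 0 < γ) :
    ∃ C : ℝ, 0 < C ∧ ∀ c₀ : ℝ, 0 < c₀ →
      ∀ η : Measure (EuclideanSpace ℝ (Fin (n + 1))), IsFiniteMeasure η →
        (∀ (x : EuclideanSpace ℝ (Fin (n + 1))) (r : ℝ), 0 < r →
          η (ball x r) ≤ ENNReal.ofReal (c₀ * r ^ n)) →
        ∀ (ι : Type) (_ : Countable ι) (S : ι → Set (EuclideanSpace ℝ (Fin (n + 1)))),
          (∀ i, MeasurableSet (S i)) → Pairwise (Function.onFun Disjoint S) →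
          ∀ ℓ : ι → ℝ, (∀ i, 0 < ℓ i) →
          (∀ i, EMetric.diam (S i) ≤ ENNReal.ofReal (ℓ i)) →
          ∫⁻ x, (∑' i, Set.indicator (S i)
              (fun _ => ∑' j, if j = i then 0 else
                ENNReal.ofReal (ℓ j ^ γ) * η (S j) *
                  (ENNReal.ofReal (ℓ i) + ENNReal.ofReal (ℓ j) +
                    ⨅ x' ∈ S i, EMetric.infEdist x' (S j)) ^ (-(n : ℝ) - γ)) x) ^ 2 ∂η
            ≤ ENNReal.ofReal ((C * c₀) ^ 2) * η (⋃ i, S i) := by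
  obtain ⟨N, τ, hτ, hN⟩ :=
    HasBesicovitchCovering.no_satelliteConfig (α := EuclideanSpace ℝ (Fin (n + 1)))
  refine ⟨2 * ((n + γ) / γ) * √(4 * N + 1), by positivity,
    fun c₀ hc₀ η _ hgrow ι _ S hSm hSd ℓ hℓ hdiam => ?_⟩
  refine (lintegral_auxiliaryFunction_sq_le hτ hN hc₀ hn hγ hgrow hSm hSd hℓ hdiam).trans_eq ?_
  rw [mul_pow, mul_pow, mul_pow, Real.sq_sqrt (by positivity)]
  ring_nf
end
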